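/- Let f be a normal ordinal function and let g be any weak hyperation of f such that g(ω^α) equals the α-th Veblen function f_α based on f, for every ordinal α. Then g is the minimal weak hyperation of f; in particular, any two weak hyperations of f with this property coincide. -/

import Mathlib

open Ordinal

universe u v

/-- The Mathlib (Dec 2024) definition of `Ordinal.IsNormal`, removed since. -/
def Ordinal.IsNormal (f : Ordinal.{u} → Ordinal.{v}) : Prop :=
  (∀ o, f o < f (Order.succ o)) ∧ ∀ o, Order.IsSuccLimit o → ∀ a, f o ≤ a ↔ ∀ b < o, f b ≤ a

/-- `g` is a weak hyperation of the normal function `f`: a family of normal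
functions with `g 0 = id`, `g 1 = f`, and `g (ξ + ζ) = g ξ ∘ g ζ`. -/
def IsWeakHyperation (f : Ordinal → Ordinal) (g : Ordinal → Ordinal → Ordinal) : Prop :=
  (∀ ξ : Ordinal, Ordinal.IsNormal (g ξ)) ∧
  g 0 = id ∧ g 1 = f ∧ ∀ ξ ζ : Ordinal, g (ξ + ζ) = g ξ ∘ g ζ

/-- `g` is the hyperation of `f`: the pointwise minimal weak hyperation of `f`. -/
def IsHyperation (f : Ordinal → Ordinal) (g : Ordinal → Ordinal → Ordinal) : Prop :=
  IsWeakHyperation f g ∧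
  ∀ h : Ordinal → Ordinal → Ordinal, IsWeakHyperation f h → ∀ ξ ζ : Ordinal, g ξ ζ ≤ h ξ ζ

/-- `V` is the Veblen progression based on `f`: `V 0 = f`, `V (α+1)` is the
derivative of `V α` (the function enumerating the fixed points of `V α`), and
for limit `λ`, `V λ` enumerates the common fixed points of all `V α`, `α < λ`. -/
def IsVeblenProgression (f : Ordinal → Ordinal) (V : Ordinal → Ordinal → Ordinal) : Prop :=
  V 0 = f ∧
  (∀ α : Ordinal, V (α + 1) = enumOrd {x | V α x = x}) ∧
  (∀ l : Ordinal, Order.IsSuccLimit l → V l = enumOrd {x | ∀ α < l, V α x = x})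


/-! For `α < β` we have `ω ^ α + ω ^ β = ω ^ β`, so every weak hyperation `h` satisfies
`h (ω ^ α) ∘ h (ω ^ β) = h (ω ^ β)`. By induction on `β`, using `f_α ≤ h (ω ^ α)` and
`id ≤ f_α`, the values of `h (ω ^ β)` are then common fixed points of the `f_α` with `α < β`;
since `f_β` enumerates exactly these, `f_β ≤ h (ω ^ β)`. So `g ≤ h` holds at every power of `ω`,
and it propagates to all indices because every ordinal is obtained from `0` and the powers of
`ω` by addition and `g ≤ h` is preserved under composition of monotone functions. Minimality
determines `g`, which gives uniqueness. -/

theorem Ordinal.IsNormal.strictMono {f : Ordinal.{u} → Ordinal.{v}} (H : Ordinal.IsNormal f) :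
    StrictMono f := by
  intro a b hab
  induction b using Ordinal.limitRecOn with
  | zero => exact (not_lt_zero hab).elim
  | add_one b IH =>
    rw [← Order.succ_eq_add_one] at hab ⊢
    rcases (Order.lt_succ_iff.1 hab).lt_or_eq with h | rfl
    · exact (IH h).trans (H.1 b)
    · exact H.1 a
  | limit b hb _ =>
    exact (H.1 a).trans_le ((H.2 b hb (f b)).1 le_rfl _ (hb.succ_lt hab))

theorem Ordinal.enumOrd_le_of_strictMono {s : Set Ordinal} {φ : Ordinal → Ordinal}
    (hφ : StrictMono φ) (hφs : ∀ x, φ x ∈ s) (o : Ordinal) : enumOrd s o ≤ φ o := by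
  induction o using WellFoundedLT.induction with
  | _ o IH => exact enumOrd_le_of_forall_lt (hφs o) fun b hb => (IH b hb).trans_lt (hφ hb)

theorem Ordinal.induction_add_omega0_opow {p : Ordinal → Prop} (zero : p 0)
    (omega0_opow : ∀ e : Ordinal, p (ω ^ e)) (add : ∀ a b, p a → p b → p (a + b))
    (o : Ordinal) : p o := by
  induction o using WellFoundedLT.induction with
  | _ o IH =>
    by_cases ho : IsPrincipal (· + ·) o
    · obtain rfl | ⟨e, rfl⟩ := isPrincipal_add_iff_zero_or_omega0_opow.1 ho
      exacts [zero, omega0_opow e]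
    · obtain ⟨a, ha, b, hb, rfl⟩ := exists_lt_add_of_not_isPrincipal_add ho
      exact add a b (IH a ha) (IH b hb)

namespace IsWeakHyperation

variable {f : Ordinal → Ordinal} {g h : Ordinal → Ordinal → Ordinal}

theorem apply_add (hg : IsWeakHyperation f g) (ξ ζ x : Ordinal) :
    g (ξ + ζ) x = g ξ (g ζ x) :=
  congrFun (hg.2.2.2 ξ ζ) x

theorem apply_opow_apply_opow_of_lt (hg : IsWeakHyperation f g) {α β : Ordinal} (hαβ : α < β)
    (x : Ordinal) : g (ω ^ α) (g (ω ^ β) x) = g (ω ^ β) x := by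
  rw [← hg.apply_add, add_omega0_opow ((opow_lt_opow_iff_right one_lt_omega0).2 hαβ)]

theorem isFixedPt_apply_opow (hh : IsWeakHyperation f h) {φ : Ordinal → Ordinal}
    {α β : Ordinal} (hαβ : α < β) (hφ : ∀ y, y ≤ φ y) (hφh : ∀ y, φ y ≤ h (ω ^ α) y)
    (x : Ordinal) : Function.IsFixedPt φ (h (ω ^ β) x) :=
  le_antisymm ((hφh _).trans_eq (hh.apply_opow_apply_opow_of_lt hαβ x)) (hφ _)

theorem le_of_forall_opow_le (hg : IsWeakHyperation f g) (hh : IsWeakHyperation f h)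
    (hpow : ∀ (e : Ordinal) x, g (ω ^ e) x ≤ h (ω ^ e) x) (ξ x : Ordinal) : g ξ x ≤ h ξ x := by
  induction ξ using Ordinal.induction_add_omega0_opow generalizing x with
  | zero => rw [hg.2.1, hh.2.1]
  | omega0_opow e => exact hpow e x
  | add a b ha hb =>
    rw [hg.apply_add, hh.apply_add]
    exact (ha _).trans ((hh.1 a).strictMono.monotone (hb x))

end IsWeakHyperation

namespace IsVeblenProgression

variable {f : Ordinal → Ordinal} {g h V : Ordinal → Ordinal → Ordinal}

theorem le_apply_opow (hV : IsVeblenProgression f V) (hg : IsWeakHyperation f g)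
    (hgV : ∀ α, g (ω ^ α) = V α) (hh : IsWeakHyperation f h) (α x : Ordinal) :
    V α x ≤ h (ω ^ α) x := by
  have hV_ge : ∀ α y, y ≤ V α y := fun α y => hgV α ▸ (hg.1 _).strictMono.le_apply
  induction α using Ordinal.limitRecOn generalizing x with
  | zero => rw [hV.1, opow_zero, hh.2.2.1]
  | add_one α IH =>
    rw [hV.2.1]
    exact enumOrd_le_of_strictMono (hh.1 _).strictMono
      (hh.isFixedPt_apply_opow (lt_add_one α) (hV_ge α) IH) x
  | limit l hl IH =>
    rw [hV.2.2 l hl]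
    apply enumOrd_le_of_strictMono (hh.1 _).strictMono
    exact fun y α hα => hh.isFixedPt_apply_opow hα (hV_ge α) (IH α hα) y

theorem isHyperation (hV : IsVeblenProgression f V) (hg : IsWeakHyperation f g)
    (hgV : ∀ α, g (ω ^ α) = V α) : IsHyperation f g :=
  ⟨hg, fun _ hh => hg.le_of_forall_opow_le hh fun e x =>
    (hgV e).symm ▸ hV.le_apply_opow hg hgV hh e x⟩

end IsVeblenProgression

theorem IsHyperation.eq {f : Ordinal → Ordinal} {g g' : Ordinal → Ordinal → Ordinal}
    (hg : IsHyperation f g) (hg' : IsHyperation f g') : g = g' :=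
  funext₂ fun ξ x => le_antisymm (hg.2 g' hg'.1 ξ x) (hg'.2 g hg.1 ξ x)

theorem stmt12_general (f : Ordinal → Ordinal)
    (g : Ordinal → Ordinal → Ordinal) (hg : IsWeakHyperation f g)
    (V : Ordinal → Ordinal → Ordinal) (hV : IsVeblenProgression f V)
    (hgV : ∀ α : Ordinal, g (ω ^ α) = V α) :
    IsHyperation f g ∧
      ∀ g' : Ordinal → Ordinal → Ordinal,
        IsWeakHyperation f g' → (∀ α : Ordinal, g' (ω ^ α) = V α) → g' = g :=
  ⟨hV.isHyperation hg hgV, fun _ hg' hg'V =>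
    (hV.isHyperation hg' hg'V).eq (hV.isHyperation hg hgV)⟩

/-- If `g` is a weak hyperation of the normal function `f` with `g (ω ^ α) = V α`
for all `α`, where `V` is the Veblen progression based on `f`, then `g` is the
minimal weak hyperation of `f`; in particular any two weak hyperations of `f`
with this property coincide. -/
theorem stmt12 (f : Ordinal → Ordinal) (hf : Ordinal.IsNormal f)
    (g : Ordinal → Ordinal → Ordinal) (hg : IsWeakHyperation f g)
    (V : Ordinal → Ordinal → Ordinal) (hV : IsVeblenProgression f V)
    (hgV : ∀ α : Ordinal, g (ω ^ α) = V α) :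
    IsHyperation f g ∧
      ∀ g' : Ordinal → Ordinal → Ordinal,
        IsWeakHyperation f g' → (∀ α : Ordinal, g' (ω ^ α) = V α) → g' = g :=
  stmt12_general f g hg V hV hgV
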